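/- arXiv:1703.00150 — 2 statements merged into one kernel-verified Lean document; each statement's English description precedes it below -/
import Mathlib

section
/- Let k be an algebraically closed field and A a finite-dimensional k-algebra, and let t and t̃ be two Calabi–Yau families of traces on the finitely generated projective right A-modules, with associated operations τ and τ̃ (where τ_R(y)_P := Σ_i g^i ∘ y ∘ g_i for dual bases with respect to t, and τ̃ is defined analogously using t̃). Then the two resulting Higman ideals coincide: for every finitely generated projective R and y ∈ End_A(R) there exist a finitely generated projective R' and y' ∈ End_A(R') such that τ_R(y)_P = τ̃_{R'}(y')_P for all finitely generated projective P, and conversely. -/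
universe u

/-- A bundled finitely generated projective right `A`-module (with compatible `k`-action). -/
structure FGProj (k A : Type u) [Field k] [Ring A] [Algebra k A] : Type (u + 1) where
  carrier : Type u
  [isAddCommGroup : AddCommGroup carrier]
  [isModuleK : Module k carrier]
  [isModuleA : Module Aᵐᵒᵖ carrier]
  [isTower : IsScalarTower k Aᵐᵒᵖ carrier]
  [isFinite : Module.Finite Aᵐᵒᵖ carrier]
  [isProjective : Module.Projective Aᵐᵒᵖ carrier]

attribute [instance] FGProj.isAddCommGroup FGProj.isModuleK FGProj.isModuleA
  FGProj.isTower FGProj.isFinite FGProj.isProjective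

instance (k A : Type u) [Field k] [Ring A] [Algebra k A] : CoeSort (FGProj k A) (Type u) :=
  ⟨FGProj.carrier⟩

/-- A Calabi–Yau family of traces on the finitely generated projective right `A`-modules. -/
structure CYTraces (k A : Type u) [Field k] [Ring A] [Algebra k A] : Type (u + 1) where
  t : ∀ P : FGProj k A, ((P : Type u) →ₗ[Aᵐᵒᵖ] P) →ₗ[k] k
  cyclic : ∀ (P Q : FGProj k A) (f : (P : Type u) →ₗ[Aᵐᵒᵖ] Q) (g : (Q : Type u) →ₗ[Aᵐᵒᵖ] P),
    t P (g ∘ₗ f) = t Q (f ∘ₗ g)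
  nondeg_left : ∀ (P Q : FGProj k A) (f : (P : Type u) →ₗ[Aᵐᵒᵖ] Q), f ≠ 0 →
    ∃ g : (Q : Type u) →ₗ[Aᵐᵒᵖ] P, t Q (f ∘ₗ g) ≠ 0
  nondeg_right : ∀ (P Q : FGProj k A) (g : (Q : Type u) →ₗ[Aᵐᵒᵖ] P), g ≠ 0 →
    ∃ f : (P : Type u) →ₗ[Aᵐᵒᵖ] Q, t Q (f ∘ₗ g) ≠ 0

open scoped Classical

/-!
Nondegeneracy of `t_R` on the finite-dimensional algebra `End_A(R)` lets one write the other trace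
as `t̃_R = t_R(- ∘ u)` for some `u ∈ End_A(R)`. If `(h_j, h'_j)` are dual bases for `t̃`, then
`(h_j, h'_j ∘ u)` are dual bases for `t`, and since `τ` does not depend on the choice of dual bases,
`τ_R(y) = Σ_j h'_j ∘ u ∘ y ∘ h_j = τ̃_R(u ∘ y)`. Exchanging the roles of `t` and `t̃` gives the
converse.
-/

section FiniteDimensional

variable {k A : Type u} [Field k] [Ring A] [Algebra k A] [FiniteDimensional k A]

instance FGProj.finiteDimensional (P : FGProj k A) : FiniteDimensional k P :=
  have : Module.Finite k Aᵐᵒᵖ := Module.Finite.equiv (MulOpposite.opLinearEquiv k)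
  Module.Finite.trans Aᵐᵒᵖ P

instance FGProj.finiteDimensional_hom (P Q : FGProj k A) :
    FiniteDimensional k ((P : Type u) →ₗ[Aᵐᵒᵖ] Q) :=
  Module.Finite.of_injective (LinearMap.restrictScalarsₗ k Aᵐᵒᵖ P Q k)
    (LinearMap.restrictScalars_injective k)

end FiniteDimensional

namespace CYTraces

variable {k A : Type u} [Field k] [Ring A] [Algebra k A] (t : CYTraces k A)

def pairing (P R : FGProj k A) :
    ((R : Type u) →ₗ[Aᵐᵒᵖ] P) →ₗ[k] ((P : Type u) →ₗ[Aᵐᵒᵖ] R) →ₗ[k] k :=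
  LinearMap.mk₂ k (fun w f => t.t R (f ∘ₗ w))
    (fun _ _ _ => by rw [LinearMap.comp_add, map_add])
    (fun c w f => by rw [LinearMap.comp_smul, map_smul, smul_eq_mul])
    (fun _ _ _ => by rw [LinearMap.add_comp, map_add])
    (fun c w f => by rw [LinearMap.smul_comp, map_smul, smul_eq_mul])

@[simp]
theorem pairing_apply {P R : FGProj k A} (w : (R : Type u) →ₗ[Aᵐᵒᵖ] P)
    (f : (P : Type u) →ₗ[Aᵐᵒᵖ] R) : t.pairing P R w f = t.t R (f ∘ₗ w) :=
  rfl

theorem pairing_injective (P R : FGProj k A) : Function.Injective (t.pairing P R) := by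
  rw [← LinearMap.ker_eq_bot, LinearMap.ker_eq_bot']
  intro w hw
  by_contra hne
  obtain ⟨f, hf⟩ := t.nondeg_right P R w hne
  exact hf (LinearMap.congr_fun hw f)

theorem exists_trace_comp_eq [FiniteDimensional k A] (t' : CYTraces k A) (R : FGProj k A) :
    ∃ u : (R : Type u) →ₗ[Aᵐᵒᵖ] R, ∀ x, t.t R (x ∘ₗ u) = t'.t R x := by
  have hsurj : Function.Surjective (t.pairing R R) :=
    (LinearMap.injective_iff_surjective_of_finrank_eq_finrank
      Subspace.dual_finrank_eq.symm).mp (t.pairing_injective R R)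
  obtain ⟨u, hu⟩ := hsurj (t'.t R)
  exact ⟨u, LinearMap.congr_fun hu⟩

def AreDual {P R : FGProj k A} {ι : Type*} (g : ι → ((P : Type u) →ₗ[Aᵐᵒᵖ] R))
    (g' : ι → ((R : Type u) →ₗ[Aᵐᵒᵖ] P)) : Prop :=
  ∀ i j, t.t R (g j ∘ₗ g' i) = if i = j then 1 else 0

namespace AreDual

variable {t} {P R : FGProj k A} {ι : Type*}

theorem comp_right {t' : CYTraces k A} {u : (R : Type u) →ₗ[Aᵐᵒᵖ] R}
    (hu : ∀ x, t.t R (x ∘ₗ u) = t'.t R x) {h : ι → ((P : Type u) →ₗ[Aᵐᵒᵖ] R)}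
    {h' : ι → ((R : Type u) →ₗ[Aᵐᵒᵖ] P)} (hh : t'.AreDual h h') :
    t.AreDual h fun i => h' i ∘ₗ u := fun i j => by
  rw [← LinearMap.comp_assoc, hu, hh]

variable {g : Module.Basis ι k ((P : Type u) →ₗ[Aᵐᵒᵖ] R)} {g' : ι → ((R : Type u) →ₗ[Aᵐᵒᵖ] P)}

theorem repr_apply (hg : t.AreDual g g') (f : (P : Type u) →ₗ[Aᵐᵒᵖ] R) (j : ι) :
    g.repr f j = t.t R (f ∘ₗ g' j) := by
  have : g.coord j = t.pairing P R (g' j) :=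
    g.ext fun i => by simp [hg j i, Finsupp.single_apply, eq_comm]
  exact LinearMap.congr_fun this f

theorem sum_trace_comp_smul [Fintype ι] (hg : t.AreDual g g') (w : (R : Type u) →ₗ[Aᵐᵒᵖ] P) :
    ∑ j, t.t R (g j ∘ₗ w) • g' j = w := by
  refine t.pairing_injective P R (g.ext fun i => ?_)
  simp [map_sum, hg _ i]

theorem sum_comp_comp_eq [Fintype ι] (hg : t.AreDual g g') {κ : Type*} [Fintype κ]
    {G : Module.Basis κ k ((P : Type u) →ₗ[Aᵐᵒᵖ] R)} {G' : κ → ((R : Type u) →ₗ[Aᵐᵒᵖ] P)}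
    (hG : t.AreDual G G') (y : (R : Type u) →ₗ[Aᵐᵒᵖ] R) :
    ∑ i, g' i ∘ₗ y ∘ₗ g i = ∑ j, G' j ∘ₗ y ∘ₗ G j := by
  calc ∑ i, g' i ∘ₗ y ∘ₗ g i
      = ∑ i, (∑ j, t.t R (G j ∘ₗ g' i) • G' j) ∘ₗ y ∘ₗ g i := by
        simp only [hG.sum_trace_comp_smul]
    _ = ∑ j, G' j ∘ₗ y ∘ₗ ∑ i, t.t R (G j ∘ₗ g' i) • g i := by
        ext x; simp [Finset.sum_comm (γ := ι)]
    _ = ∑ j, G' j ∘ₗ y ∘ₗ G j := by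
        simp only [← hg.repr_apply, g.sum_repr]

end AreDual

theorem exists_sum_comp_comp_eq [FiniteDimensional k A] (t' : CYTraces k A) (R : FGProj k A)
    (y : (R : Type u) →ₗ[Aᵐᵒᵖ] R) :
    ∃ y' : (R : Type u) →ₗ[Aᵐᵒᵖ] R, ∀ (P : FGProj k A) {ι κ : Type*} [Fintype ι] [Fintype κ]
      {g : Module.Basis ι k ((P : Type u) →ₗ[Aᵐᵒᵖ] R)} {g' : ι → ((R : Type u) →ₗ[Aᵐᵒᵖ] P)}
      {h : Module.Basis κ k ((P : Type u) →ₗ[Aᵐᵒᵖ] R)} {h' : κ → ((R : Type u) →ₗ[Aᵐᵒᵖ] P)},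
      t.AreDual g g' → t'.AreDual h h' → ∑ i, g' i ∘ₗ y ∘ₗ g i = ∑ j, h' j ∘ₗ y' ∘ₗ h j := by
  obtain ⟨u, hu⟩ := t.exists_trace_comp_eq t' R
  exact ⟨u ∘ₗ y, fun P _ _ _ _ _ _ _ _ hg hh => hg.sum_comp_comp_eq (hh.comp_right hu) y⟩

end CYTraces

theorem higman_independent_of_trace_general
    (k A : Type u) [Field k] [Ring A] [Algebra k A] [FiniteDimensional k A]
    (t t' : CYTraces k A) :
    (∀ (R : FGProj k A) (y : (R : Type u) →ₗ[Aᵐᵒᵖ] R),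
      ∃ (R' : FGProj k A) (y' : (R' : Type u) →ₗ[Aᵐᵒᵖ] R'),
        ∀ (P : FGProj k A) (ι κ : Type u) [Fintype ι] [Fintype κ]
          (g : Module.Basis ι k ((P : Type u) →ₗ[Aᵐᵒᵖ] R))
          (g' : Module.Basis ι k ((R : Type u) →ₗ[Aᵐᵒᵖ] P)),
          (∀ i j, t.t R (g j ∘ₗ g' i) = if i = j then 1 else 0) →
          ∀ (h : Module.Basis κ k ((P : Type u) →ₗ[Aᵐᵒᵖ] R'))
            (h' : Module.Basis κ k ((R' : Type u) →ₗ[Aᵐᵒᵖ] P)),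
            (∀ i j, t'.t R' (h j ∘ₗ h' i) = if i = j then 1 else 0) →
            ∑ i, g' i ∘ₗ y ∘ₗ g i = ∑ j, h' j ∘ₗ y' ∘ₗ h j) ∧
    (∀ (R' : FGProj k A) (y' : (R' : Type u) →ₗ[Aᵐᵒᵖ] R'),
      ∃ (R : FGProj k A) (y : (R : Type u) →ₗ[Aᵐᵒᵖ] R),
        ∀ (P : FGProj k A) (ι κ : Type u) [Fintype ι] [Fintype κ]
          (g : Module.Basis ι k ((P : Type u) →ₗ[Aᵐᵒᵖ] R))
          (g' : Module.Basis ι k ((R : Type u) →ₗ[Aᵐᵒᵖ] P)),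
          (∀ i j, t.t R (g j ∘ₗ g' i) = if i = j then 1 else 0) →
          ∀ (h : Module.Basis κ k ((P : Type u) →ₗ[Aᵐᵒᵖ] R'))
            (h' : Module.Basis κ k ((R' : Type u) →ₗ[Aᵐᵒᵖ] P)),
            (∀ i j, t'.t R' (h j ∘ₗ h' i) = if i = j then 1 else 0) →
            ∑ i, g' i ∘ₗ y ∘ₗ g i = ∑ j, h' j ∘ₗ y' ∘ₗ h j) := by
  refine ⟨fun R y => ?_, fun R' y' => ?_⟩
  · obtain ⟨y', hy'⟩ := t.exists_sum_comp_comp_eq t' R y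
    exact ⟨R, y', fun P _ _ _ _ _ _ hg _ _ hh => hy' P hg hh⟩
  · obtain ⟨y, hy⟩ := t'.exists_sum_comp_comp_eq t R' y'
    exact ⟨R', y, fun P _ _ _ _ _ _ hg _ _ hh => (hy P hh hg).symm⟩

/-- Two Calabi–Yau families of traces `t` and `t'` on the f.g. projective
right `A`-modules give the same Higman ideal: every element `τ_R(y)` (with `τ` computed from
dual bases with respect to `t`) equals some `τ̃_{R'}(y')` (computed from dual bases with
respect to `t'`), and conversely. -/
theorem higman_independent_of_trace
    (k A : Type u) [Field k] [IsAlgClosed k] [Ring A] [Algebra k A] [FiniteDimensional k A]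
    (t t' : CYTraces k A) :
    (∀ (R : FGProj k A) (y : (R : Type u) →ₗ[Aᵐᵒᵖ] R),
      ∃ (R' : FGProj k A) (y' : (R' : Type u) →ₗ[Aᵐᵒᵖ] R'),
        ∀ (P : FGProj k A) (ι κ : Type u) [Fintype ι] [Fintype κ]
          (g : Module.Basis ι k ((P : Type u) →ₗ[Aᵐᵒᵖ] R))
          (g' : Module.Basis ι k ((R : Type u) →ₗ[Aᵐᵒᵖ] P)),
          (∀ i j, t.t R (g j ∘ₗ g' i) = if i = j then 1 else 0) →
          ∀ (h : Module.Basis κ k ((P : Type u) →ₗ[Aᵐᵒᵖ] R'))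
            (h' : Module.Basis κ k ((R' : Type u) →ₗ[Aᵐᵒᵖ] P)),
            (∀ i j, t'.t R' (h j ∘ₗ h' i) = if i = j then 1 else 0) →
            ∑ i, g' i ∘ₗ y ∘ₗ g i = ∑ j, h' j ∘ₗ y' ∘ₗ h j) ∧
    (∀ (R' : FGProj k A) (y' : (R' : Type u) →ₗ[Aᵐᵒᵖ] R'),
      ∃ (R : FGProj k A) (y : (R : Type u) →ₗ[Aᵐᵒᵖ] R),
        ∀ (P : FGProj k A) (ι κ : Type u) [Fintype ι] [Fintype κ]
          (g : Module.Basis ι k ((P : Type u) →ₗ[Aᵐᵒᵖ] R))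
          (g' : Module.Basis ι k ((R : Type u) →ₗ[Aᵐᵒᵖ] P)),
          (∀ i j, t.t R (g j ∘ₗ g' i) = if i = j then 1 else 0) →
          ∀ (h : Module.Basis κ k ((P : Type u) →ₗ[Aᵐᵒᵖ] R'))
            (h' : Module.Basis κ k ((R' : Type u) →ₗ[Aᵐᵒᵖ] P)),
            (∀ i j, t'.t R' (h j ∘ₗ h' i) = if i = j then 1 else 0) →
            ∑ i, g' i ∘ₗ y ∘ₗ g i = ∑ j, h' j ∘ₗ y' ∘ₗ h j) :=
  higman_independent_of_trace_general k A t t'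
end

section
/- Let k be an algebraically closed field, A a finite-dimensional k-algebra, and t a Calabi–Yau family of traces on the finitely generated projective right A-modules; for a finitely generated projective R and y ∈ End_A(R) let τ_R(y)_P := Σ_i g^i ∘ y ∘ g_i ∈ End_A(P), computed from any dual bases (g_i) of Hom_A(P,R) and (g^i) of Hom_A(R,P). Define ε : A → k by ε(a) := t_A(ℓ_a), where ℓ_a ∈ End_A(A) is the endomorphism of the right regular module given by left multiplication by a. Then ε is central (ε(ab) = ε(ba)) and nondegenerate (ε(ab) = 0 for all b implies a = 0), and for any pair of k-bases (u_l), (v_l) of A dual with respect to ε (i.e. ε(u_l v_m) = δ_{lm}) one has the equality of subsets of A: { τ_R(y)_A(1) : R a finitely generated projective right A-module, y ∈ End_A(R) } = { Σ_l u_l a v_l : a ∈ A }. (That is, evaluating the categorical Higman ideal at the regular module recovers the Higman ideal Hig(A) of the symmetric algebra (A, ε).) -/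
universe u

section Regular

variable (k A : Type u) [Field k] [Ring A] [Algebra k A]

instance : Module.Finite Aᵐᵒᵖ A :=
  Module.Finite.equiv (MulOpposite.opLinearEquiv Aᵐᵒᵖ : A ≃ₗ[Aᵐᵒᵖ] Aᵐᵒᵖ).symm

instance : Module.Projective Aᵐᵒᵖ A :=
  Module.Projective.of_equiv (MulOpposite.opLinearEquiv Aᵐᵒᵖ : A ≃ₗ[Aᵐᵒᵖ] Aᵐᵒᵖ).symm

/-- The right regular module `A_A`, as a bundled finitely generated projective right
`A`-module. -/
def regularFGProj : FGProj k A := ⟨A⟩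

/-- Left multiplication by `a` as an endomorphism of the right regular module. -/
def lmulOp (a : A) : A →ₗ[Aᵐᵒᵖ] A where
  toFun x := a * x
  map_add' := mul_add a
  map_smul' r x := by
    simp only [MulOpposite.smul_eq_mul_unop, RingHom.id_apply, mul_assoc]

end Regular

open scoped Classical

/-!
Every endomorphism of the regular module `A_A` is a left multiplication `ℓ_a`, so centrality and
nondegeneracy of `ε a = t_A(ℓ_a)` are cyclicity and nondegeneracy of `t` at `A`.

The heart of the matter is the trace property `τ_R(α ∘ β)_P = τ_Q(β ∘ α)_P` for `α : Q → R`,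
`β : R → Q`: expanding `β ∘ g_i` in a basis of `Hom(P, Q)` and `h'_j ∘ β` in a basis of
`Hom(R, P)`, both sides become the same double sum, the coefficients agreeing by cyclicity of `t`.
If `(u_l), (v_l)` are dual for `ε`, then `(ℓ_{v_l}), (ℓ_{u_l})` are dual for `t` at `A`, so
`τ_A(ℓ_a)_A(1) = Σ u_l a v_l`. Conversely a finitely generated projective `R` has a finite dual
basis `id_R = Σ_m α_m ∘ β_m` with `α_m : A → R`, `β_m : R → A`, whence
`τ_R(y)_A = Σ_m τ_A(β_m ∘ y ∘ α_m)_A` lies in the Higman ideal.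
-/

theorem LinearMap.comp_finsetSum {R M N P ι : Type*} [Semiring R] [AddCommMonoid M]
    [AddCommMonoid N] [AddCommMonoid P] [Module R M] [Module R N] [Module R P] (s : Finset ι)
    (f : N →ₗ[R] P) (g : ι → M →ₗ[R] N) : f ∘ₗ ∑ i ∈ s, g i = ∑ i ∈ s, f ∘ₗ g i :=
  LinearMap.ext fun x => by simp

theorem LinearMap.finsetSum_comp {R M N P ι : Type*} [Semiring R] [AddCommMonoid M]
    [AddCommMonoid N] [AddCommMonoid P] [Module R M] [Module R N] [Module R P] (s : Finset ι)
    (f : ι → N →ₗ[R] P) (g : M →ₗ[R] N) : (∑ i ∈ s, f i) ∘ₗ g = ∑ i ∈ s, f i ∘ₗ g :=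
  LinearMap.ext fun x => by simp

section Regular

variable {k A : Type u} [Field k] [Ring A] [Algebra k A]

theorem lmulOp_apply (a x : A) : lmulOp A a x = a * x := rfl

theorem lmulOp_mul (a b : A) : lmulOp A (a * b) = lmulOp A a ∘ₗ lmulOp A b :=
  LinearMap.ext fun x => mul_assoc a b x

theorem lmulOp_apply_one (f : A →ₗ[Aᵐᵒᵖ] A) : lmulOp A (f 1) = f :=
  LinearMap.ext_ring_op (mul_one _)

theorem lmulOp_comp_comp_lmulOp (a b : A) (f : A →ₗ[Aᵐᵒᵖ] A) :
    lmulOp A a ∘ₗ f ∘ₗ lmulOp A b = lmulOp A (a * f 1 * b) := by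
  rw [lmulOp_mul, lmulOp_mul, lmulOp_apply_one, LinearMap.comp_assoc]

theorem exists_sum_comp_eq_id (R : Type*) [AddCommGroup R] [Module Aᵐᵒᵖ R]
    [Module.Finite Aᵐᵒᵖ R] [Module.Projective Aᵐᵒᵖ R] :
    ∃ (n : ℕ) (α : Fin n → A →ₗ[Aᵐᵒᵖ] R) (β : Fin n → R →ₗ[Aᵐᵒᵖ] A),
      ∑ m, α m ∘ₗ β m = LinearMap.id := by
  obtain ⟨n, f, g, -, -, hfg⟩ := Module.Finite.exists_comp_eq_id_of_projective Aᵐᵒᵖ R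
  let e : A ≃ₗ[Aᵐᵒᵖ] Aᵐᵒᵖ := MulOpposite.opLinearEquiv Aᵐᵒᵖ
  refine ⟨n, fun m => f ∘ₗ LinearMap.single Aᵐᵒᵖ (fun _ => Aᵐᵒᵖ) m ∘ₗ e.toLinearMap,
    fun m => e.symm.toLinearMap ∘ₗ LinearMap.proj m ∘ₗ g, ?_⟩
  refine LinearMap.ext fun x => ?_
  simpa [e, ← map_sum, Finset.univ_sum_single] using LinearMap.congr_fun hfg x

noncomputable def lmulOpBasis {ι : Type*} (v : Module.Basis ι k A) :
    Module.Basis ι k (A →ₗ[Aᵐᵒᵖ] A) :=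
  v.map (AlgEquiv.moduleEndSelfOp k).toLinearEquiv

@[simp]
theorem lmulOpBasis_apply {ι : Type*} (v : Module.Basis ι k A) (l : ι) :
    lmulOpBasis v l = lmulOp A (v l) := rfl

end Regular

namespace CYTraces

variable {k A : Type u} [Field k] [Ring A] [Algebra k A] (t : CYTraces k A)

def regularTrace : A →ₗ[k] k :=
  t.t (regularFGProj k A) ∘ₗ (AlgEquiv.moduleEndSelfOp (A := A) k).toLinearMap

theorem regularTrace_apply (a : A) :
    t.regularTrace a = t.t (regularFGProj k A) (lmulOp A a) := rfl

theorem trace_regularFGProj (f : A →ₗ[Aᵐᵒᵖ] A) :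
    t.t (regularFGProj k A) f = t.regularTrace (f 1) :=
  congrArg (t.t (regularFGProj k A)) (lmulOp_apply_one f).symm

theorem regularTrace_mul_comm (a b : A) :
    t.regularTrace (a * b) = t.regularTrace (b * a) := by
  simp only [regularTrace_apply, lmulOp_mul]
  exact t.cyclic (regularFGProj k A) (regularFGProj k A) (lmulOp A b) (lmulOp A a)

theorem eq_zero_of_regularTrace_mul_eq_zero {a : A} (h : ∀ b, t.regularTrace (a * b) = 0) :
    a = 0 := by
  by_contra ha
  have hℓ : lmulOp A a ≠ 0 := fun h0 =>
    ha (by simpa [lmulOp_apply] using LinearMap.congr_fun h0 1)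
  obtain ⟨g, hg⟩ : ∃ g : A →ₗ[Aᵐᵒᵖ] A, t.t (regularFGProj k A) (lmulOp A a ∘ₗ g) ≠ 0 :=
    t.nondeg_left (regularFGProj k A) (regularFGProj k A) (lmulOp A a) hℓ
  exact hg ((t.trace_regularFGProj _).trans (h _))

def IsDualPair {P R : FGProj k A} {ι : Type*} [DecidableEq ι]
    (g : ι → ((P : Type u) →ₗ[Aᵐᵒᵖ] R)) (g' : ι → ((R : Type u) →ₗ[Aᵐᵒᵖ] P)) : Prop :=
  ∀ i j, t.t R (g j ∘ₗ g' i) = if i = j then 1 else 0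

namespace IsDualPair

variable {t} {P Q R : FGProj k A} {ι κ : Type*} [DecidableEq ι] [DecidableEq κ]

theorem repr_left {g : Module.Basis ι k ((P : Type u) →ₗ[Aᵐᵒᵖ] R)}
    {g' : ι → ((R : Type u) →ₗ[Aᵐᵒᵖ] P)} (hg : t.IsDualPair g g')
    (φ : (P : Type u) →ₗ[Aᵐᵒᵖ] R) (i : ι) : g.repr φ i = t.t R (φ ∘ₗ g' i) :=
  g.repr_apply_eq (fun φ i => t.t R (φ ∘ₗ g' i))
    (fun _ _ => by ext; simp [LinearMap.add_comp]) (fun _ _ => by ext; simp [LinearMap.smul_comp])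
    (fun j => by ext i; simp [hg i j, Finsupp.single_apply, eq_comm]) φ i

theorem repr_right {g : ι → ((P : Type u) →ₗ[Aᵐᵒᵖ] R)}
    {g' : Module.Basis ι k ((R : Type u) →ₗ[Aᵐᵒᵖ] P)} (hg : t.IsDualPair g g')
    (ψ : (R : Type u) →ₗ[Aᵐᵒᵖ] P) (i : ι) : g'.repr ψ i = t.t R (g i ∘ₗ ψ) :=
  g'.repr_apply_eq (fun ψ i => t.t R (g i ∘ₗ ψ))
    (fun _ _ => by ext; simp [LinearMap.comp_add]) (fun _ _ => by ext; simp [LinearMap.comp_smul])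
    (fun j => by ext i; simp [hg j i, Finsupp.single_apply]) ψ i

theorem comp_equiv {g : ι → ((P : Type u) →ₗ[Aᵐᵒᵖ] R)} {g' : ι → ((R : Type u) →ₗ[Aᵐᵒᵖ] P)}
    (hg : t.IsDualPair g g') (e : κ ≃ ι) : t.IsDualPair (g ∘ e) (g' ∘ e) := fun i j => by
  simp [hg (e i) (e j)]

theorem sum_comp_comp_comm [Fintype ι] [Fintype κ] {g : ι → ((P : Type u) →ₗ[Aᵐᵒᵖ] R)}
    {g' : Module.Basis ι k ((R : Type u) →ₗ[Aᵐᵒᵖ] P)} (hg : t.IsDualPair g g')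
    {h : Module.Basis κ k ((P : Type u) →ₗ[Aᵐᵒᵖ] Q)} {h' : κ → ((Q : Type u) →ₗ[Aᵐᵒᵖ] P)}
    (hh : t.IsDualPair h h') (α : (Q : Type u) →ₗ[Aᵐᵒᵖ] R) (β : (R : Type u) →ₗ[Aᵐᵒᵖ] Q) :
    ∑ i, g' i ∘ₗ (α ∘ₗ β) ∘ₗ g i = ∑ j, h' j ∘ₗ (β ∘ₗ α) ∘ₗ h j := by
  have expand_left : ∀ i, g' i ∘ₗ (α ∘ₗ β) ∘ₗ g i
      = ∑ j, t.t Q (β ∘ₗ g i ∘ₗ h' j) • (g' i ∘ₗ α ∘ₗ h j) := by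
    intro i
    conv_lhs => rw [LinearMap.comp_assoc, ← h.sum_repr (β ∘ₗ g i)]
    simp only [LinearMap.comp_finsetSum, LinearMap.comp_smul, hh.repr_left, LinearMap.comp_assoc]
  have expand_right : ∀ j, h' j ∘ₗ (β ∘ₗ α) ∘ₗ h j
      = ∑ i, t.t R (g i ∘ₗ h' j ∘ₗ β) • (g' i ∘ₗ α ∘ₗ h j) := by
    intro j
    conv_lhs => rw [← LinearMap.comp_assoc, ← LinearMap.comp_assoc, ← g'.sum_repr (h' j ∘ₗ β)]
    simp only [LinearMap.finsetSum_comp, LinearMap.smul_comp, hg.repr_right, LinearMap.comp_assoc]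
  simp only [expand_left, expand_right]
  rw [Finset.sum_comm]
  refine Finset.sum_congr rfl fun j _ => Finset.sum_congr rfl fun i _ => ?_
  rw [← t.cyclic R Q β (g i ∘ₗ h' j)]
  rfl

end IsDualPair

section SymmetricAlgebra

variable {ι : Type*} [DecidableEq ι] {u v : Module.Basis ι k A}

theorem isDualPair_lmulOpBasis
    (huv : ∀ l m, t.regularTrace (u l * v m) = if l = m then 1 else 0) :
    t.IsDualPair (P := regularFGProj k A) (R := regularFGProj k A)
      (lmulOpBasis v) (lmulOpBasis u) :=
  fun i j => (congrArg (t.t (regularFGProj k A)) (lmulOp_mul (v j) (u i)).symm).trans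
    ((t.regularTrace_mul_comm _ _).trans (huv i j))

theorem exists_sum_comp_comp_apply_one_eq [Fintype ι]
    (huv : ∀ l m, t.regularTrace (u l * v m) = if l = m then 1 else 0)
    {R : FGProj k A} {κ : Type*} [Fintype κ] [DecidableEq κ] {g : κ → A →ₗ[Aᵐᵒᵖ] R}
    {g' : Module.Basis κ k ((R : Type u) →ₗ[Aᵐᵒᵖ] A)}
    (hg : t.IsDualPair (P := regularFGProj k A) g g') (y : (R : Type u) →ₗ[Aᵐᵒᵖ] R) :
    ∃ a, (∑ i, g' i ∘ₗ y ∘ₗ g i) 1 = ∑ l, u l * a * v l := by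
  obtain ⟨N, α, β, hαβ⟩ := exists_sum_comp_eq_id (A := A) R
  refine ⟨∑ m, β m (y (α m 1)), ?_⟩
  have hy : y = ∑ m, (y ∘ₗ α m) ∘ₗ β m := by
    conv_lhs => rw [← LinearMap.comp_id y, ← hαβ, LinearMap.comp_finsetSum]
    rfl
  calc (∑ i, g' i ∘ₗ y ∘ₗ g i) 1
      = ∑ m, (∑ i, g' i ∘ₗ ((y ∘ₗ α m) ∘ₗ β m) ∘ₗ g i) 1 := by
        conv_lhs => rw [hy]
        simp only [LinearMap.finsetSum_comp, LinearMap.comp_finsetSum, LinearMap.sum_apply]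
        exact Finset.sum_comm
    _ = ∑ m, (∑ l, lmulOpBasis u l ∘ₗ (β m ∘ₗ y ∘ₗ α m) ∘ₗ lmulOpBasis v l) 1 := by
        refine Finset.sum_congr rfl fun m _ => congrArg (fun f : A →ₗ[Aᵐᵒᵖ] A => f 1) ?_
        exact hg.sum_comp_comp_comm (t.isDualPair_lmulOpBasis huv) (y ∘ₗ α m) (β m)
    _ = ∑ l, u l * (∑ m, β m (y (α m 1))) * v l := by
        simp only [lmulOpBasis_apply, lmulOp_comp_comp_lmulOp, LinearMap.sum_apply, lmulOp_apply,
          mul_one, Finset.mul_sum, Finset.sum_mul]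
        exact Finset.sum_comm

theorem exists_isDualPair_sum_comp_lmulOp_comp_apply_one [Fintype ι]
    (huv : ∀ l m, t.regularTrace (u l * v m) = if l = m then 1 else 0) (a : A) :
    ∃ (n : ℕ) (g g' : Module.Basis (Fin n) k (A →ₗ[Aᵐᵒᵖ] A)),
      t.IsDualPair (P := regularFGProj k A) (R := regularFGProj k A) g g' ∧
      (∑ i, g' i ∘ₗ lmulOp A a ∘ₗ g i) 1 = ∑ l, u l * a * v l := by
  let e := Fintype.equivFin ι
  refine ⟨_, (lmulOpBasis v).reindex e, (lmulOpBasis u).reindex e, ?_, ?_⟩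
  · rw [Module.Basis.coe_reindex, Module.Basis.coe_reindex]
    exact (t.isDualPair_lmulOpBasis huv).comp_equiv e.symm
  · simp only [LinearMap.sum_apply, Module.Basis.reindex_apply, lmulOpBasis_apply,
      LinearMap.comp_apply, lmulOp_apply, mul_one, mul_assoc]
    exact e.symm.sum_comp fun l => u l * (a * v l)

end SymmetricAlgebra

end CYTraces

theorem higman_of_CY_traces_at_regular_general
    (k A : Type u) [Field k] [Ring A] [Algebra k A]
    (t : CYTraces k A)
    (ε : A →ₗ[k] k) (hε : ∀ a : A, ε a = t.t (regularFGProj k A) (lmulOp A a)) :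
    (∀ a b : A, ε (a * b) = ε (b * a)) ∧
    (∀ a : A, (∀ b : A, ε (a * b) = 0) → a = 0) ∧
    (∀ (ι : Type u) [Fintype ι] (u v : Module.Basis ι k A),
      (∀ l m, ε (u l * v m) = if l = m then 1 else 0) →
      {x : A | ∃ (R : FGProj k A) (y : (R : Type u) →ₗ[Aᵐᵒᵖ] R) (n : ℕ)
          (g : Module.Basis (Fin n) k (A →ₗ[Aᵐᵒᵖ] R)) (g' : Module.Basis (Fin n) k ((R : Type u) →ₗ[Aᵐᵒᵖ] A)),
          (∀ i j, t.t R (g j ∘ₗ g' i) = if i = j then 1 else 0) ∧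
          x = (∑ i, g' i ∘ₗ y ∘ₗ g i) 1}
        = {x : A | ∃ a : A, x = ∑ l, u l * a * v l}) := by
  obtain rfl : ε = t.regularTrace := LinearMap.ext hε
  refine ⟨t.regularTrace_mul_comm, fun a => t.eq_zero_of_regularTrace_mul_eq_zero,
    fun ι _ u v huv => Set.ext fun x => ⟨?_, ?_⟩⟩
  · rintro ⟨R, y, n, g, g', hg, rfl⟩
    exact t.exists_sum_comp_comp_apply_one_eq huv hg y
  · rintro ⟨a, rfl⟩
    obtain ⟨n, g, g', hg, hsum⟩ := t.exists_isDualPair_sum_comp_lmulOp_comp_apply_one huv a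
    exact ⟨regularFGProj k A, lmulOp A a, n, g, g', hg, hsum.symm⟩

/-- Let `t` be a Calabi–Yau family of traces on the f.g. projective right
`A`-modules and define `ε : A → k` by `ε a = t_A (ℓ_a)`, using the right regular module.
Then `ε` is central and nondegenerate, and for any pair of dual bases `(uₗ), (vₗ)` of `A`
with respect to `ε`, the set of values `τ_R(y)_A(1)` (computed via dual bases with respect
to `t`) equals the Higman ideal `{Σ_l uₗ a vₗ : a ∈ A}`. -/
theorem higman_of_CY_traces_at_regular
    (k A : Type u) [Field k] [IsAlgClosed k] [Ring A] [Algebra k A] [FiniteDimensional k A]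
    (t : CYTraces k A)
    (ε : A →ₗ[k] k) (hε : ∀ a : A, ε a = t.t (regularFGProj k A) (lmulOp A a)) :
    (∀ a b : A, ε (a * b) = ε (b * a)) ∧
    (∀ a : A, (∀ b : A, ε (a * b) = 0) → a = 0) ∧
    (∀ (ι : Type u) [Fintype ι] (u v : Module.Basis ι k A),
      (∀ l m, ε (u l * v m) = if l = m then 1 else 0) →
      {x : A | ∃ (R : FGProj k A) (y : (R : Type u) →ₗ[Aᵐᵒᵖ] R) (n : ℕ)
          (g : Module.Basis (Fin n) k (A →ₗ[Aᵐᵒᵖ] R)) (g' : Module.Basis (Fin n) k ((R : Type u) →ₗ[Aᵐᵒᵖ] A)),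
          (∀ i j, t.t R (g j ∘ₗ g' i) = if i = j then 1 else 0) ∧
          x = (∑ i, g' i ∘ₗ y ∘ₗ g i) 1}
        = {x : A | ∃ a : A, x = ∑ l, u l * a * v l}) :=
  higman_of_CY_traces_at_regular_general k A t ε hε
end
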